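/- arXiv:2605.21922 — 5 statements merged into one kernel-verified Lean document; each statement's English description precedes it below -/
import Mathlib

section
/- Let β > 0 and k ≥ 2. For points 0 ≤ x₁ < x₂ < ⋯ < x_k ≤ 1 with gaps δᵢ = x_{i+1} - xᵢ, suppose D_β({x₁,…,x_k}) = 1 + Σ_{i=1}^{k-1} tanh(βδᵢ/2). Then among all k-point subsets of [0,1], D_β is uniquely maximized by the equally spaced set {0, 1/(k-1), 2/(k-1), …, 1}, with maximum value 1 + (k-1)·tanh(β/(2(k-1))). -/
/-!
`tanh` is strictly increasing and strictly concave on `[0, ∞)`. By Jensen, the sum of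
`tanh (β δᵢ / 2)` over the `n = k - 1` gaps is at most `n · tanh` of the mean scaled gap
`β (x_k - x_1) / (2n) ≤ β / (2n)`. Equality in Jensen forces all gaps to be equal, and equality
in the monotonicity step forces `x_k - x_1 = 1`, i.e. `x_1 = 0` and `x_k = 1`.
-/

open Finset Real

namespace Real

theorem hasDerivAt_tanh (x : ℝ) : HasDerivAt tanh (1 - tanh x ^ 2) x := by
  have hcosh := (cosh_pos x).ne'
  have hquot := (hasDerivAt_sinh x).div (hasDerivAt_cosh x) hcosh
  have hvalue : (cosh x * cosh x - sinh x * sinh x) / cosh x ^ 2 = 1 - tanh x ^ 2 := by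
    rw [tanh_eq_sinh_div_cosh]
    field_simp
  rwa [hvalue, ← show tanh = sinh / cosh from funext tanh_eq_sinh_div_cosh] at hquot

theorem deriv_tanh : deriv tanh = fun x => 1 - tanh x ^ 2 :=
  funext fun x => (hasDerivAt_tanh x).deriv

theorem strictMono_tanh : StrictMono tanh :=
  strictMono_of_deriv_pos fun x => by
    rw [deriv_tanh]
    linarith [tanh_sq_lt_one x]

theorem tanh_pos {x : ℝ} (hx : 0 < x) : 0 < tanh x := by
  simpa [tanh_zero] using strictMono_tanh hx

theorem strictConcaveOn_tanh : StrictConcaveOn ℝ (Set.Ici 0) tanh := by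
  refine strictConcaveOn_of_deriv2_neg (convex_Ici 0)
    (fun x _ => (hasDerivAt_tanh x).continuousAt.continuousWithinAt) fun x hx => ?_
  rw [interior_Ici] at hx
  have hderiv2 : deriv^[2] tanh x = -(2 * tanh x * (1 - tanh x ^ 2)) := by
    rw [Function.iterate_succ_apply, Function.iterate_one, deriv_tanh]
    exact (((hasDerivAt_tanh x).pow 2).const_sub 1).deriv.trans (by ring)
  rw [hderiv2]
  nlinarith [tanh_sq_lt_one x, tanh_pos hx]

end Real

theorem Fin.sum_succ_sub_castSucc {M : Type*} [AddCommGroup M] :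
    ∀ {n : ℕ} (x : Fin (n + 1) → M),
      ∑ i : Fin n, (x i.succ - x i.castSucc) = x (Fin.last n) - x 0
  | 0, x => by simp
  | n + 1, x => by
    simp only [Fin.sum_univ_castSucc, Fin.succ_castSucc]
    rw [Fin.sum_succ_sub_castSucc (fun i => x i.castSucc)]
    simp only [Fin.succ_last, Fin.castSucc_zero]
    abel

theorem Fin.eq_add_mul_of_succ_sub_castSucc_eq {R : Type*} [Ring R] {n : ℕ}
    {x : Fin (n + 1) → R} {c : R} (h : ∀ i : Fin n, x i.succ - x i.castSucc = c)
    (i : Fin (n + 1)) : x i = x 0 + (i : ℕ) * c := by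
  induction i using Fin.induction with
  | zero => simp
  | succ i ih =>
    rw [← sub_add_cancel (x i.succ) (x i.castSucc), h, ih, Fin.val_succ, Fin.val_castSucc, Nat.cast_succ, add_mul, one_mul]
    abel

section Jensen

variable {𝕜 ι : Type*} [Field 𝕜] [LinearOrder 𝕜] [IsStrictOrderedRing 𝕜]
  {s : Set 𝕜} {f : 𝕜 → 𝕜} {t : Finset ι} {p : ι → 𝕜}

theorem ConcaveOn.sum_le_card_mul_map_sum_div (hf : ConcaveOn 𝕜 s f) (ht : t.Nonempty)
    (hp : ∀ i ∈ t, p i ∈ s) :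
    ∑ i ∈ t, f (p i) ≤ #t * f ((∑ i ∈ t, p i) / #t) := by
  have hcard : (0 : 𝕜) < #t := by exact_mod_cast ht.card_pos
  have hjensen := hf.le_map_sum (w := fun _ => (#t : 𝕜)⁻¹) (fun _ _ => by positivity)
    (by simp [hcard.ne']) hp
  simp only [smul_eq_mul, ← mul_sum] at hjensen
  rw [div_eq_inv_mul]
  exact (inv_mul_le_iff₀ hcard).1 hjensen

theorem StrictConcaveOn.eq_of_card_mul_map_sum_div_le (hf : StrictConcaveOn 𝕜 s f)
    (hp : ∀ i ∈ t, p i ∈ s) (h : #t * f ((∑ i ∈ t, p i) / #t) ≤ ∑ i ∈ t, f (p i)) :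
    ∀ j ∈ t, ∀ k ∈ t, p j = p k := by
  intro j hj k hk
  have hcard : (0 : 𝕜) < #t := by exact_mod_cast card_pos.2 ⟨j, hj⟩
  refine hf.eq_of_map_sum_eq (w := fun _ => (#t : 𝕜)⁻¹) (fun _ _ => by positivity)
    (by simp [hcard.ne']) hp ?_ hj hk
  simp only [smul_eq_mul, ← mul_sum]
  rw [← div_eq_inv_mul, le_inv_mul_iff₀ hcard]
  exact h

end Jensen

noncomputable def tanhGapSum {n : ℕ} (β : ℝ) (x : Fin (n + 1) → ℝ) : ℝ :=
  ∑ i : Fin n, tanh (β * (x i.succ - x i.castSucc) / 2)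

section tanhGapSum

variable {n : ℕ} {β : ℝ} {x : Fin (n + 1) → ℝ}

theorem strictMono_uniform (hn : 0 < n) : StrictMono fun i : Fin (n + 1) => (i : ℝ) / n :=
  fun _ _ hij => div_lt_div_of_pos_right (Nat.cast_lt.2 hij) (Nat.cast_pos.2 hn)

theorem uniform_mem_Icc (i : Fin (n + 1)) : (i : ℝ) / n ∈ Set.Icc (0 : ℝ) 1 :=
  ⟨by positivity, div_le_one_of_le₀ (Nat.cast_le.2 i.is_le) n.cast_nonneg⟩

theorem tanhGapSum_uniform (β : ℝ) (n : ℕ) :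
    tanhGapSum β (fun i : Fin (n + 1) => (i : ℝ) / n) = n * tanh (β / (2 * n)) := by
  have hgap (i : ℝ) : β * ((i + 1) / n - i / n) / 2 = β / (2 * n) := by ring
  simp only [tanhGapSum, Fin.val_succ, Fin.val_castSucc, Nat.cast_succ, hgap, sum_const,
    card_univ, Fintype.card_fin, nsmul_eq_mul]

theorem scaled_gap_nonneg (hβ : 0 ≤ β) (hx : Monotone x) (i : Fin n) :
    0 ≤ β * (x i.succ - x i.castSucc) / 2 := by
  have := sub_nonneg.2 (hx (Fin.castSucc_lt_succ (i := i)).le)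
  positivity

theorem sum_scaled_gap (β : ℝ) (x : Fin (n + 1) → ℝ) :
    ∑ i : Fin n, β * (x i.succ - x i.castSucc) / 2 = β * (x (Fin.last n) - x 0) / 2 := by
  rw [← sum_div, ← mul_sum, Fin.sum_succ_sub_castSucc]

theorem tanhGapSum_le_mean (hβ : 0 ≤ β) (hx : Monotone x) (hn : 0 < n) :
    tanhGapSum β x ≤ n * tanh (β * (x (Fin.last n) - x 0) / (2 * n)) := by
  have := strictConcaveOn_tanh.concaveOn.sum_le_card_mul_map_sum_div
    (univ_nonempty_iff.2 ⟨⟨0, hn⟩⟩) fun i _ => Set.mem_Ici.2 (scaled_gap_nonneg hβ hx i)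
  rwa [sum_scaled_gap, card_univ, Fintype.card_fin, div_div] at this

theorem tanh_scaled_span_le (hβ : 0 ≤ β) (hmem : ∀ i, x i ∈ Set.Icc (0 : ℝ) 1) :
    tanh (β * (x (Fin.last n) - x 0) / (2 * n)) ≤ tanh (β / (2 * n)) := by
  refine strictMono_tanh.monotone (div_le_div_of_nonneg_right ?_ (by positivity))
  exact mul_le_of_le_one_right hβ (by linarith [(hmem 0).1, (hmem (Fin.last n)).2])

theorem tanhGapSum_le (hβ : 0 ≤ β) (hx : Monotone x) (hmem : ∀ i, x i ∈ Set.Icc (0 : ℝ) 1)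
    (hn : 0 < n) : tanhGapSum β x ≤ n * tanh (β / (2 * n)) :=
  (tanhGapSum_le_mean hβ hx hn).trans (by gcongr; exact tanh_scaled_span_le hβ hmem)

theorem eq_uniform_of_tanhGapSum_eq (hβ : 0 < β) (hx : Monotone x)
    (hmem : ∀ i, x i ∈ Set.Icc (0 : ℝ) 1) (hn : 0 < n)
    (h : tanhGapSum β x = n * tanh (β / (2 * n))) : x = fun i : Fin (n + 1) => (i : ℝ) / n := by
  have hn' : (0 : ℝ) < n := by exact_mod_cast hn
  have hmean := tanhGapSum_le_mean hβ.le hx hn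
  have htanh : tanh (β * (x (Fin.last n) - x 0) / (2 * n)) = tanh (β / (2 * n)) :=
    (tanh_scaled_span_le hβ.le hmem).antisymm (le_of_mul_le_mul_left (h ▸ hmean) hn')
  have hspan : x (Fin.last n) - x 0 = 1 := by
    have := strictMono_tanh.injective htanh
    field_simp at this
    exact this
  have hx0 : x 0 = 0 := by linarith [(hmem 0).1, (hmem (Fin.last n)).2]
  have hequal := strictConcaveOn_tanh.eq_of_card_mul_map_sum_div_le
    (fun i _ => Set.mem_Ici.2 (scaled_gap_nonneg hβ.le hx i)) (by
      rw [sum_scaled_gap, card_univ, Fintype.card_fin, div_div, hspan, mul_one]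
      exact h.ge)
  have hgap (i : Fin n) : x i.succ - x i.castSucc = 1 / n := by
    have hall (j : Fin n) : x j.succ - x j.castSucc = x i.succ - x i.castSucc := by
      simpa [hβ.ne'] using hequal j (mem_univ _) i (mem_univ _)
    have hsum := Fin.sum_succ_sub_castSucc x
    rw [sum_congr rfl fun j _ => hall j, sum_const, card_univ, Fintype.card_fin, nsmul_eq_mul,
      hspan] at hsum
    field_simp
    linarith
  funext i
  rw [Fin.eq_add_mul_of_succ_sub_castSucc_eq hgap i, hx0]
  ring

end tanhGapSum

/-- Uniform spacing theorem on the unit interval, assuming the gap-sum (finite-line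
magnitude) formula for the Solow–Polasky diversity `D` on ordered point sets.
Here `k = n + 1` points with `1 ≤ n`, so `k ≥ 2`. -/
theorem stmt_4 (β : ℝ) (hβ : 0 < β) (n : ℕ) (hn : 1 ≤ n)
    (D : (Fin (n + 1) → ℝ) → ℝ)
    (hD : ∀ x : Fin (n + 1) → ℝ, StrictMono x → (∀ i, x i ∈ Set.Icc (0 : ℝ) 1) →
      D x = 1 + ∑ i : Fin n, Real.tanh (β * (x i.succ - x i.castSucc) / 2)) :
    let xstar : Fin (n + 1) → ℝ := fun i => (i : ℝ) / (n : ℝ)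
    D xstar = 1 + (n : ℝ) * Real.tanh (β / (2 * (n : ℝ))) ∧
    (∀ x : Fin (n + 1) → ℝ, StrictMono x → (∀ i, x i ∈ Set.Icc (0 : ℝ) 1) →
      D x ≤ D xstar ∧ (D x = D xstar → x = xstar)) := by
  intro xstar
  have hDgap : ∀ x, StrictMono x → (∀ i, x i ∈ Set.Icc (0 : ℝ) 1) → D x = 1 + tanhGapSum β x := hD
  have hDstar : D xstar = 1 + n * tanh (β / (2 * n)) := by
    rw [hDgap xstar (strictMono_uniform hn) uniform_mem_Icc, tanhGapSum_uniform]
  refine ⟨hDstar, fun x hx hmem => ?_⟩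
  rw [hDstar, hDgap x hx hmem]
  exact ⟨by linarith [tanhGapSum_le hβ.le hx.monotone hmem hn],
    fun h => eq_uniform_of_tanhGapSum_eq hβ hx.monotone hmem hn (by linarith)⟩
end

section
/- Let β > 0 and let 0 ≤ x₁ < ⋯ < x_k be real numbers with gaps δᵢ = x_{i+1} - xᵢ. Then 𝟙ᵀ Z⁻¹ 𝟙 = 1 + Σ_{i=1}^{k-1} tanh(βδᵢ/2), where Z is the k×k matrix with Z_{ij} = e^{-β|xᵢ - xⱼ|} (which is invertible). -/
/-!
Order the points and let `Z i j = exp (-β |xᵢ - xⱼ|)`. For `i ≤ j ≤ k` the exponents add, so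
`Z i k = Z i j * Z j k`. Writing `tᵢ = Z i (i+1)`, the unit upper bidiagonal matrix `B` with rows
`eᵢ - tᵢ eᵢ₊₁` (last row `eₙ`) therefore makes `B Z` lower triangular; then `B Z Bᵀ` is lower
triangular and symmetric, hence diagonal, with entries `1 - tᵢ²` (and `1` last). Since `det B = 1`,
`Z⁻¹ = Bᵀ D⁻¹ B`, and the sum of its entries is `∑ (B 𝟙)ᵢ² / Dᵢ = 1 + ∑ (1 - tᵢ) / (1 + tᵢ)`,
where `(1 - e^{-y}) / (1 + e^{-y}) = tanh (y / 2)`.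
-/

open Matrix

namespace Matrix

variable {m K : Type*} [Fintype m] [LinearOrder m]

omit [Fintype m] in
theorem IsLowerTriangular.isDiag_of_isSymm [Zero K] {A : Matrix m m K}
    (hA : A.IsLowerTriangular) (hsymm : A.IsSymm) : A.IsDiag := by
  intro i j hij
  rcases hij.lt_or_gt with h | h
  · exact hA h
  · rw [← hsymm.apply i j]
    exact hA h

theorem IsLowerTriangular.mul_apply_self [NonUnitalNonAssocSemiring K] {A B : Matrix m m K}
    (hA : A.IsLowerTriangular) (hB : B.IsLowerTriangular) (i : m) :
    (A * B) i i = A i i * B i i := by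
  rw [mul_apply, Finset.sum_eq_single i]
  · intro k _ hki
    rcases hki.lt_or_gt with h | h
    · rw [hB h, mul_zero]
    · rw [hA h, zero_mul]
  · simp

omit [LinearOrder m] in
theorem inv_eq_transpose_mul_inv_mul [DecidableEq m] [CommRing K] (Z B : Matrix m m K)
    (hB : IsUnit B.det) : Z⁻¹ = Bᵀ * (B * Z * Bᵀ)⁻¹ * B := by
  rw [mul_inv_rev, mul_inv_rev, ← Matrix.mul_assoc, ← Matrix.mul_assoc,
    mul_nonsing_inv _ (by rwa [det_transpose]), Matrix.one_mul, Matrix.mul_assoc,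
    nonsing_inv_mul _ hB, Matrix.mul_one]

omit [LinearOrder m] in
theorem sum_sum_transpose_mul_diagonal_mul [DecidableEq m] [CommSemiring K] (B : Matrix m m K)
    (w : m → K) : ∑ i, ∑ j, (Bᵀ * diagonal w * B) i j = ∑ k, w k * (∑ j, B k j) ^ 2 := by
  have entry (i j : m) : (Bᵀ * diagonal w * B) i j = ∑ k, w k * (B k i * B k j) := by
    rw [mul_apply]
    exact Finset.sum_congr rfl fun k _ => by rw [mul_diagonal, transpose_apply]; ring
  simp only [entry, sq, Finset.sum_mul_sum]
  simp only [Finset.mul_sum]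
  exact (Finset.sum_congr rfl fun i _ => Finset.sum_comm).trans Finset.sum_comm

end Matrix

variable {K : Type*} {n : ℕ}

structure IsChainKernel [Mul K] [One K] (Z : Matrix (Fin (n + 1)) (Fin (n + 1)) K) : Prop where
  isSymm : Z.IsSymm
  apply_self (i : Fin (n + 1)) : Z i i = 1
  apply_eq_mul {i j k : Fin (n + 1)} : i ≤ j → j ≤ k → Z i k = Z i j * Z j k

namespace IsChainKernel

section CommRing

variable [CommRing K]

def step (Z : Matrix (Fin (n + 1)) (Fin (n + 1)) K) (k : Fin n) : K := Z k.castSucc k.succ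

def elimMatrix (Z : Matrix (Fin (n + 1)) (Fin (n + 1)) K) : Matrix (Fin (n + 1)) (Fin (n + 1)) K :=
  Matrix.of fun i => Fin.lastCases (Pi.single (Fin.last n) 1)
    (fun k => Pi.single k.castSucc 1 - step Z k • Pi.single k.succ 1) i

def pivot (Z : Matrix (Fin (n + 1)) (Fin (n + 1)) K) : Fin (n + 1) → K :=
  Fin.lastCases 1 fun k => 1 - step Z k ^ 2

variable (Z : Matrix (Fin (n + 1)) (Fin (n + 1)) K)

@[simp] theorem elimMatrix_last : elimMatrix Z (Fin.last n) = Pi.single (Fin.last n) 1 := by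
  ext j; simp [elimMatrix]

@[simp] theorem elimMatrix_castSucc (k : Fin n) :
    elimMatrix Z k.castSucc = Pi.single k.castSucc 1 - step Z k • Pi.single k.succ 1 := by
  ext j; simp [elimMatrix]

theorem elimMatrix_mul_last (M : Matrix (Fin (n + 1)) (Fin (n + 1)) K) :
    (elimMatrix Z * M) (Fin.last n) = M (Fin.last n) := by
  ext j; simp [mul_apply, Pi.single_apply]

theorem elimMatrix_mul_castSucc (M : Matrix (Fin (n + 1)) (Fin (n + 1)) K) (k : Fin n) :
    (elimMatrix Z * M) k.castSucc = M k.castSucc - step Z k • M k.succ := by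
  ext j; simp [mul_apply, sub_mul, Finset.sum_sub_distrib, Pi.single_apply]

theorem elimMatrix_isUpperTriangular : (elimMatrix Z).IsUpperTriangular := by
  intro i j (hji : j < i)
  induction i using Fin.lastCases with
  | last => simp [Pi.single_eq_of_ne hji.ne]
  | cast k =>
    have : j < k.succ := hji.trans Fin.castSucc_lt_succ
    simp [Pi.single_eq_of_ne hji.ne, Pi.single_eq_of_ne this.ne]

theorem elimMatrix_apply_self (i : Fin (n + 1)) : elimMatrix Z i i = 1 := by
  induction i using Fin.lastCases with
  | last => simp
  | cast k => simp [(Fin.castSucc_lt_succ (i := k)).ne]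

theorem det_elimMatrix : (elimMatrix Z).det = 1 := by
  simp [det_of_isUpperTriangular (elimMatrix_isUpperTriangular Z), elimMatrix_apply_self]

theorem sum_elimMatrix_last : ∑ j, elimMatrix Z (Fin.last n) j = 1 := by simp

theorem sum_elimMatrix_castSucc (k : Fin n) : ∑ j, elimMatrix Z k.castSucc j = 1 - step Z k := by
  simp [Finset.sum_sub_distrib, Pi.single_apply]

variable {Z} (hZ : IsChainKernel Z)
include hZ

theorem elimMatrix_mul_isLowerTriangular : (elimMatrix Z * Z).IsLowerTriangular := by
  intro i j (hij : i < j)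
  induction i using Fin.lastCases with
  | last => exact absurd hij (Fin.le_last j).not_gt
  | cast k =>
    have hkj : k.succ ≤ j := Fin.castSucc_lt_iff_succ_le.mp hij
    rw [elimMatrix_mul_castSucc, Pi.sub_apply, Pi.smul_apply, smul_eq_mul, step,
      hZ.apply_eq_mul Fin.castSucc_lt_succ.le hkj, sub_self]

theorem elimMatrix_mul_apply_self (i : Fin (n + 1)) : (elimMatrix Z * Z) i i = pivot Z i := by
  induction i using Fin.lastCases with
  | last => simp [elimMatrix_mul_last, hZ.apply_self, pivot]
  | cast k =>
    rw [elimMatrix_mul_castSucc, Pi.sub_apply, Pi.smul_apply, smul_eq_mul, hZ.apply_self,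
      hZ.isSymm.apply, pivot, Fin.lastCases_castSucc, step]
    ring

theorem elimMatrix_mul_mul_transpose :
    elimMatrix Z * Z * (elimMatrix Z)ᵀ = diagonal (pivot Z) := by
  have hlower : (elimMatrix Z * Z * (elimMatrix Z)ᵀ).IsLowerTriangular :=
    hZ.elimMatrix_mul_isLowerTriangular.mul (elimMatrix_isUpperTriangular Z).transpose
  have hsymm : (elimMatrix Z * Z * (elimMatrix Z)ᵀ).IsSymm := by
    rw [IsSymm, transpose_mul, transpose_mul, transpose_transpose, hZ.isSymm.eq,
      Matrix.mul_assoc]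
  rw [← (hlower.isDiag_of_isSymm hsymm).diagonal_diag]
  congr 1
  ext i
  rw [diag_apply, hZ.elimMatrix_mul_isLowerTriangular.mul_apply_self
    (elimMatrix_isUpperTriangular Z).transpose, transpose_apply, elimMatrix_apply_self, mul_one,
    hZ.elimMatrix_mul_apply_self]

theorem det_eq_prod_pivot : Z.det = ∏ i, pivot Z i := by
  simpa [det_elimMatrix] using congrArg det hZ.elimMatrix_mul_mul_transpose

end CommRing

section Field

variable [Field K] {Z : Matrix (Fin (n + 1)) (Fin (n + 1)) K}

theorem pivot_ne_zero (hstep : ∀ k, step Z k ^ 2 ≠ 1) (i : Fin (n + 1)) : pivot Z i ≠ 0 := by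
  induction i using Fin.lastCases with
  | last => simp [pivot]
  | cast k => simpa [pivot] using sub_ne_zero.mpr (hstep k).symm

variable (hZ : IsChainKernel Z)
include hZ

theorem inv_eq (hstep : ∀ k, step Z k ^ 2 ≠ 1) :
    Z⁻¹ = (elimMatrix Z)ᵀ * diagonal (fun i => (pivot Z i)⁻¹) * elimMatrix Z := by
  have hdiag : (diagonal (pivot Z))⁻¹ = diagonal fun i => (pivot Z i)⁻¹ :=
    inv_eq_left_inv (by simp [diagonal_mul_diagonal, inv_mul_cancel₀ (pivot_ne_zero hstep _)])
  rw [inv_eq_transpose_mul_inv_mul Z (elimMatrix Z) (by simp [det_elimMatrix]),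
    hZ.elimMatrix_mul_mul_transpose, hdiag]

theorem sum_sum_inv (hstep : ∀ k, step Z k ^ 2 ≠ 1) :
    ∑ i, ∑ j, Z⁻¹ i j = 1 + ∑ k, (1 - step Z k) / (1 + step Z k) := by
  rw [hZ.inv_eq hstep, sum_sum_transpose_mul_diagonal_mul, Fin.sum_univ_castSucc, add_comm]
  simp only [sum_elimMatrix_last, sum_elimMatrix_castSucc, pivot, Fin.lastCases_last,
    Fin.lastCases_castSucc]
  congr 1
  · simp
  · refine Finset.sum_congr rfl fun k _ => ?_
    have h1 : 1 - step Z k ≠ 0 := fun h => hstep k (by linear_combination (-(1 + step Z k)) * h)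
    have h2 : 1 + step Z k ≠ 0 := fun h => hstep k (by linear_combination (step Z k - 1) * h)
    rw [show 1 - step Z k ^ 2 = (1 - step Z k) * (1 + step Z k) by ring]
    field_simp

theorem isUnit_det (hstep : ∀ k, step Z k ^ 2 ≠ 1) : IsUnit Z.det := by
  rw [hZ.det_eq_prod_pivot, isUnit_iff_ne_zero, Finset.prod_ne_zero_iff]
  exact fun i _ => pivot_ne_zero hstep i

end Field

end IsChainKernel

open Real

theorem isChainKernel_exp_neg_abs (β : ℝ) {x : Fin (n + 1) → ℝ} (hx : Monotone x) :
    IsChainKernel fun i j => exp (-β * |x i - x j|) where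
  isSymm := IsSymm.ext fun i j => by simp only [abs_sub_comm]
  apply_self i := by simp
  apply_eq_mul {i j k} hij hjk := by
    have hij := hx hij
    have hjk := hx hjk
    rw [← exp_add, abs_of_nonpos (by linarith), abs_of_nonpos (by linarith),
      abs_of_nonpos (by linarith)]
    ring_nf

theorem Real.tanh_half_eq (y : ℝ) : tanh (y / 2) = (1 - exp (-y)) / (1 + exp (-y)) := by
  have hexp : exp (-y) = exp (-(y / 2)) ^ 2 := by rw [← exp_nat_mul]; ring_nf
  have hinv : exp (y / 2) * exp (-(y / 2)) = 1 := by rw [← exp_add]; simp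
  rw [tanh_eq, hexp, div_eq_div_iff (by positivity) (by positivity)]
  linear_combination 2 * exp (-(y / 2)) * hinv

theorem stmt_6_general (β : ℝ) (hβ : 0 < β) (n : ℕ) (x : Fin (n + 1) → ℝ)
    (hmono : StrictMono x) :
    let Z : Matrix (Fin (n + 1)) (Fin (n + 1)) ℝ :=
      fun i j => Real.exp (-β * |x i - x j|)
    IsUnit Z.det ∧
    ∑ i, ∑ j, Z⁻¹ i j =
      1 + ∑ i : Fin n, Real.tanh (β * (x i.succ - x i.castSucc) / 2) := by
  intro Z
  have hZ : IsChainKernel Z := isChainKernel_exp_neg_abs β hmono.monotone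
  have hgap (k : Fin n) : 0 < β * (x k.succ - x k.castSucc) :=
    mul_pos hβ (sub_pos.2 (hmono Fin.castSucc_lt_succ))
  have step_eq (k : Fin n) :
      IsChainKernel.step Z k = exp (-(β * (x k.succ - x k.castSucc))) := by
    have hlt := hmono (Fin.castSucc_lt_succ (i := k))
    simp only [IsChainKernel.step, Z, abs_of_neg (sub_neg.2 hlt)]
    ring_nf
  have hstep_sq (k : Fin n) : IsChainKernel.step Z k ^ 2 ≠ 1 := by
    rw [step_eq]
    exact (pow_lt_one₀ (exp_pos _).le (exp_lt_one_iff.2 (neg_lt_zero.2 (hgap k))) two_ne_zero).ne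
  refine ⟨hZ.isUnit_det hstep_sq, ?_⟩
  rw [hZ.sum_sum_inv hstep_sq]
  simp only [step_eq, tanh_half_eq]

/-- The finite-line magnitude (Solow–Polasky) formula: for ordered points
`0 ≤ x 0 < x 1 < ⋯` on the line, the exponential similarity matrix is invertible
and the sum of all entries of its inverse is `1 + ∑ tanh (β δᵢ / 2)`. -/
theorem stmt_6 (β : ℝ) (hβ : 0 < β) (n : ℕ) (x : Fin (n + 1) → ℝ)
    (hx0 : 0 ≤ x 0) (hmono : StrictMono x) :
    let Z : Matrix (Fin (n + 1)) (Fin (n + 1)) ℝ :=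
      fun i j => Real.exp (-β * |x i - x j|)
    IsUnit Z.det ∧
    ∑ i, ∑ j, Z⁻¹ i j =
      1 + ∑ i : Fin n, Real.tanh (β * (x i.succ - x i.castSucc) / 2) :=
  stmt_6_general β hβ n x hmono
end

section
/- Let u, v, w ∈ (0,1) and let Z₃ be the 3×3 matrix [[1,u,w],[u,1,v],[w,v,1]] with Δ = det Z₃ = 1 + 2uvw - u² - v² - w² ≠ 0. Then 𝟙ᵀ Z₃⁻¹ 𝟙 - 1 = 2(1-u)(1-v)(1-w) / (1 + 2uvw - u² - v² - w²). -/
theorem stmt_8 (u v w : ℝ) (hu : u ∈ Set.Ioo (0 : ℝ) 1) (hv : v ∈ Set.Ioo (0 : ℝ) 1)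
    (hw : w ∈ Set.Ioo (0 : ℝ) 1)
    (hΔ : 1 + 2 * u * v * w - u ^ 2 - v ^ 2 - w ^ 2 ≠ 0) :
    (!![(1 : ℝ), u, w; u, 1, v; w, v, 1]).det =
      1 + 2 * u * v * w - u ^ 2 - v ^ 2 - w ^ 2 ∧
    (∑ i, ∑ j, (!![(1 : ℝ), u, w; u, 1, v; w, v, 1])⁻¹ i j) - 1 =
      2 * (1 - u) * (1 - v) * (1 - w) / (1 + 2 * u * v * w - u ^ 2 - v ^ 2 - w ^ 2) := by
  have hdet : (!![(1 : ℝ), u, w; u, 1, v; w, v, 1]).det =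
      1 + 2 * u * v * w - u ^ 2 - v ^ 2 - w ^ 2 := by
    simp [Matrix.det_fin_three]; ring
  refine ⟨hdet, ?_⟩
  rw [Matrix.inv_def, hdet, Matrix.adjugate_fin_three]
  simp [Fin.sum_univ_three, Matrix.smul_apply]
  field_simp
  ring
end

section
/- Let u, v, w ∈ (0,1) with v ≤ u, w ≤ v, and suppose u² - uvw - uv + v² + w - 1 = 0. Then a contradiction follows; equivalently, the solution w = (1 + uv - u² - v²)/(1 - uv) satisfies w > v, which is incompatible with w ≤ v. -/
theorem stmt_10 (u v w : ℝ) (hu : u ∈ Set.Ioo (0 : ℝ) 1) (hv : v ∈ Set.Ioo (0 : ℝ) 1)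
    (hw : w ∈ Set.Ioo (0 : ℝ) 1) (hvu : v ≤ u) (hwv : w ≤ v)
    (h : u ^ 2 - u * v * w - u * v + v ^ 2 + w - 1 = 0) :
    False := by
  obtain ⟨hu0, hu1⟩ := hu
  obtain ⟨hv0, hv1⟩ := hv
  obtain ⟨hw0, hw1⟩ := hw
  nlinarith [mul_pos hu0 hv0, sq_nonneg (u - v), sq_nonneg (u + v), mul_pos (sub_pos.2 hu1) (sub_pos.2 hv1), sq_nonneg (u*v - 1), mul_nonneg (sub_nonneg.2 hwv) (sub_nonneg.2 hvu)]
end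

section
/- Let K : [0,∞) → (0,1] be continuous, non-increasing, with K(0) = 1 and K(t) < 1 for all t > 0. If the baseline-corrected diversity satisfies the three-point adjacent-gap additivity E_K({0, a, a+b}) = E_K({0,a}) + E_K({0,b}) for all a, b > 0, then K(t) = e^{-βt} with β = -log K(1) > 0. -/
/-!
Write `x = K a`, `y = K b`, `z = K (a + b)`. Inverting the similarity matrices gives
`E_K({0,t}) = (1 - K t) / (1 + K t)` and `E_K({0,a,a+b}) = 2 (1 - x) (1 - y) (1 - z) / D`, where
`D = (1 - x²) (1 - y²) - (z - x y)²` is the determinant. Additivity then factors as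
`(z - x y) ((1 - x y) (z - x y) - (1 - x²) (1 - y²)) = 0`, and since `K` is non-increasing,
`z ≤ min x y` makes the second factor negative. Hence `K` is multiplicative on `(0, ∞)`, so `log K`
is additive there, and by continuity it is linear.
-/

/-- Baseline-corrected two-point diversity `E_K({0,t})` via the inverse similarity matrix. -/
noncomputable def excessTwo (K : ℝ → ℝ) (t : ℝ) : ℝ :=
  (∑ i, ∑ j, (!![(1 : ℝ), K t; K t, 1])⁻¹ i j) - 1

/-- Baseline-corrected three-point diversity `E_K({0,a,a+b})` via the inverse similarity matrix. -/
noncomputable def excessThree (K : ℝ → ℝ) (a b : ℝ) : ℝ :=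
  (∑ i, ∑ j, (!![(1 : ℝ), K a, K (a + b); K a, 1, K b; K (a + b), K b, 1])⁻¹ i j) - 1

open Set Real

lemma excessTwo_eq (K : ℝ → ℝ) (t : ℝ) (h₁ : K t ≠ 1) (h₂ : K t ≠ -1) :
    excessTwo K t = (1 - K t) / (1 + K t) := by
  have h₁' : 1 - K t ≠ 0 := sub_ne_zero.2 h₁.symm
  have h₂' : 1 + K t ≠ 0 := by contrapose! h₂; linarith
  have hdet : 1 - K t ^ 2 ≠ 0 := by
    rw [show 1 - K t ^ 2 = (1 - K t) * (1 + K t) by ring]; exact mul_ne_zero h₁' h₂'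
  unfold excessTwo
  rw [Matrix.inv_def, Matrix.adjugate_fin_two_of, Matrix.det_fin_two_of, Ring.inverse_eq_inv]
  simp only [Fin.sum_univ_two, Matrix.smul_apply, Matrix.of_apply, Matrix.cons_val',
    Matrix.cons_val_zero, Matrix.cons_val_one, Matrix.empty_val', Matrix.cons_val_fin_one,
    smul_eq_mul, mul_one]
  field_simp
  ring

/- `D⁻¹ * D` is left uncancelled so that the formula also covers a singular matrix, whose
inverse is the junk value `0`. -/
lemma excessThree_eq_inv_mul (K : ℝ → ℝ) (a b : ℝ) :
    excessThree K a b =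
      ((1 - K a ^ 2) * (1 - K b ^ 2) - (K (a + b) - K a * K b) ^ 2)⁻¹ *
        ((1 - K a ^ 2) * (1 - K b ^ 2) - (K (a + b) - K a * K b) ^ 2
          + 2 * (1 - K a) * (1 - K b) * (1 - K (a + b))) - 1 := by
  unfold excessThree
  rw [Matrix.inv_def, Matrix.adjugate_fin_three_of, Matrix.det_fin_three, Ring.inverse_eq_inv]
  simp only [Fin.isValue, Matrix.of_apply, Matrix.cons_val', Matrix.cons_val_zero,
    Matrix.cons_val_fin_one, Matrix.cons_val_one, mul_one, Matrix.cons_val, one_mul,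
    Matrix.smul_apply, smul_eq_mul, Fin.sum_univ_three, sub_left_inj]
  ring

lemma one_sub_mul_mul_sub_mul_lt {x y z : ℝ} (hx : x ∈ Ioo (-1) 1) (hy : y ∈ Ioo (-1) 1)
    (hzx : z ≤ x) (hzy : z ≤ y) :
    (1 - x * y) * (z - x * y) < (1 - x ^ 2) * (1 - y ^ 2) := by
  wlog hyx : y ≤ x generalizing x y
  · simpa only [mul_comm x y, mul_comm (1 - x ^ 2)] using this hy hx hzy hzx (le_of_not_ge hyx)
  obtain ⟨hx₁, hx₂⟩ := hx
  obtain ⟨hy₁, hy₂⟩ := hy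
  have hxy : 0 < 1 - x * y := by nlinarith
  calc (1 - x * y) * (z - x * y) ≤ (1 - x * y) * (y - x * y) := by gcongr
    _ = (1 - x) * (y * (1 - x * y)) := by ring
    _ < (1 - x) * ((1 + x) * (1 - y ^ 2)) :=
      mul_lt_mul_of_pos_left (by nlinarith) (by linarith)
    _ = (1 - x ^ 2) * (1 - y ^ 2) := by ring

lemma eq_mul_of_div_eq_add_div {x y z : ℝ} (hx : x ∈ Ioo (-1) 1) (hy : y ∈ Ioo (-1) 1)
    (hzx : z ≤ x) (hzy : z ≤ y) (hD : (1 - x ^ 2) * (1 - y ^ 2) - (z - x * y) ^ 2 ≠ 0)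
    (h : 2 * (1 - x) * (1 - y) * (1 - z) / ((1 - x ^ 2) * (1 - y ^ 2) - (z - x * y) ^ 2)
      = (1 - x) / (1 + x) + (1 - y) / (1 + y)) :
    z = x * y := by
  have h₁x : 1 + x ≠ 0 := by linarith [hx.1]
  have h₁y : 1 + y ≠ 0 := by linarith [hy.1]
  rw [div_add_div _ _ h₁x h₁y, div_eq_div_iff hD (mul_ne_zero h₁x h₁y)] at h
  have hfactor : (z - x * y) * ((1 - x * y) * (z - x * y) - (1 - x ^ 2) * (1 - y ^ 2)) = 0 := by
    linear_combination (1 / 2) * h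
  rcases mul_eq_zero.1 hfactor with hz | hneg
  · linarith
  · exact absurd hneg (sub_neg.2 (one_sub_mul_mul_sub_mul_lt hx hy hzx hzy)).ne

lemma map_add_eq_mul_of_excessThree_eq_add {K : ℝ → ℝ} {a b : ℝ} (ha : K a ∈ Ioo (-1) 1)
    (hb : K b ∈ Ioo (-1) 1) (hab_a : K (a + b) ≤ K a) (hab_b : K (a + b) ≤ K b)
    (h : excessThree K a b = excessTwo K a + excessTwo K b) :
    K (a + b) = K a * K b := by
  have hpos : ∀ x ∈ Ioo (-1 : ℝ) 1, 0 < (1 - x) / (1 + x) := fun x hx =>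
    div_pos (by linarith [hx.2]) (by linarith [hx.1])
  rw [excessTwo_eq K a ha.2.ne ha.1.ne', excessTwo_eq K b hb.2.ne hb.1.ne',
    excessThree_eq_inv_mul] at h
  set D := (1 - K a ^ 2) * (1 - K b ^ 2) - (K (a + b) - K a * K b) ^ 2
  have hD : D ≠ 0 := by
    intro hD
    rw [hD, inv_zero, zero_mul, zero_sub] at h
    linarith [hpos _ ha, hpos _ hb]
  rw [inv_mul_eq_div, add_div, div_self hD, add_sub_cancel_left] at h
  exact eq_mul_of_div_eq_add_div ha hb hab_a hab_b hD h

lemma Ici_subset_closure_image_pos_nnrat :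
    Ici (0 : ℝ) ⊆ closure ((↑) '' Ioi (0 : ℚ≥0)) := by
  have hdense := Rat.denseRange_cast (𝕜 := ℝ) |>.open_subset_closure_inter (isOpen_Ioi (a := 0))
  rw [← closure_Ioi (0 : ℝ)]
  refine (closure_mono hdense).trans (closure_minimal (closure_mono ?_) isClosed_closure)
  rintro _ ⟨hq, q, rfl⟩
  have hq' : 0 < q := Rat.cast_pos.1 (mem_Ioi.1 hq)
  refine ⟨q.toNNRat, Rat.toNNRat_pos.2 hq', ?_⟩
  rw [← Rat.cast_nnratCast, Rat.coe_toNNRat q hq'.le]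

lemma ContinuousOn.eq_mul_of_map_add {f : ℝ → ℝ} (hf : ContinuousOn f (Ici 0))
    (hadd : ∀ a b, 0 < a → 0 < b → f (a + b) = f a + f b) {t : ℝ} (ht : 0 ≤ t) :
    f t = f 1 * t := by
  have hnat : ∀ s, 0 < s → ∀ n : ℕ, 0 < n → f (n * s) = n * f s := by
    intro s hs n hn
    induction n, hn using Nat.le_induction with
    | base => simp
    | succ n hn ih =>
      push_cast
      rw [add_mul, one_mul, hadd _ _ (by positivity) hs, ih]
      ring
  have hrat : ∀ q : ℚ≥0, 0 < q → f q = f 1 * q := by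
    intro q hq
    have hden : (q.den : ℝ) ≠ 0 := by positivity
    refine mul_left_cancel₀ hden ?_
    calc (q.den : ℝ) * f q = f (q.den * q) := (hnat _ (by positivity) _ q.den_pos).symm
      _ = f (q.num * 1) := by rw [NNRat.cast_def, mul_one, mul_div_cancel₀ _ hden]
      _ = q.num * f 1 := hnat 1 one_pos _ (NNRat.num_pos.2 hq)
      _ = q.den * (f 1 * q) := by rw [NNRat.cast_def]; field_simp
  refine EqOn.of_subset_closure ?_ hf (continuousOn_const.mul continuousOn_id) ?_
    Ici_subset_closure_image_pos_nnrat ht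
  · rintro _ ⟨q, hq, rfl⟩
    exact hrat q hq
  · rintro _ ⟨q, -, rfl⟩
    exact mem_Ici.2 (NNRat.cast_nonneg q)

lemma ContinuousOn.eq_exp_of_map_add_eq_mul {K : ℝ → ℝ} (hK : ContinuousOn K (Ici 0))
    (hpos : ∀ t, 0 ≤ t → 0 < K t) (hmul : ∀ a b, 0 < a → 0 < b → K (a + b) = K a * K b)
    {t : ℝ} (ht : 0 ≤ t) :
    K t = exp (Real.log (K 1) * t) := by
  have hlog : ContinuousOn (fun t => Real.log (K t)) (Ici 0) := hK.log fun t ht => (hpos t ht).ne'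
  rw [← hlog.eq_mul_of_map_add (fun a b ha hb => ?_) ht, exp_log (hpos t ht)]
  rw [hmul a b ha hb, log_mul (hpos a ha.le).ne' (hpos b hb.le).ne']

theorem stmt_12_general (K : ℝ → ℝ)
    (hcont : ContinuousOn K (Set.Ici 0))
    (hanti : AntitoneOn K (Set.Ici 0))
    (hrange : ∀ t, 0 ≤ t → K t ∈ Set.Ioc (0 : ℝ) 1)
    (hlt : ∀ t, 0 < t → K t < 1)
    (hadd : ∀ a b : ℝ, 0 < a → 0 < b →
      excessThree K a b = excessTwo K a + excessTwo K b) :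
    0 < -Real.log (K 1) ∧
    ∀ t, 0 ≤ t → K t = Real.exp (-(-Real.log (K 1)) * t) := by
  have hpos : ∀ t, 0 ≤ t → 0 < K t := fun t ht => (hrange t ht).1
  have hunit : ∀ t, 0 < t → K t ∈ Ioo (-1) 1 := fun t ht =>
    ⟨by linarith [hpos t ht.le], hlt t ht⟩
  have hmul : ∀ a b, 0 < a → 0 < b → K (a + b) = K a * K b := fun a b ha hb =>
    map_add_eq_mul_of_excessThree_eq_add (hunit a ha) (hunit b hb)
      (hanti (mem_Ici.2 ha.le) (mem_Ici.2 (by positivity)) (by linarith))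
      (hanti (mem_Ici.2 hb.le) (mem_Ici.2 (by positivity)) (by linarith))
      (hadd a b ha hb)
  refine ⟨neg_pos.2 (log_neg (hpos 1 zero_le_one) (hlt 1 one_pos)), fun t ht => ?_⟩
  rw [neg_neg]
  exact hcont.eq_exp_of_map_add_eq_mul hpos hmul ht

/-- Adjacent-gap additivity of the baseline-corrected diversity forces the
exponential kernel family, with `β = -log K 1 > 0`. -/
theorem stmt_12 (K : ℝ → ℝ)
    (hcont : ContinuousOn K (Set.Ici 0))
    (hanti : AntitoneOn K (Set.Ici 0))
    (hrange : ∀ t, 0 ≤ t → K t ∈ Set.Ioc (0 : ℝ) 1)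
    (hK0 : K 0 = 1)
    (hlt : ∀ t, 0 < t → K t < 1)
    (hadd : ∀ a b : ℝ, 0 < a → 0 < b →
      excessThree K a b = excessTwo K a + excessTwo K b) :
    0 < -Real.log (K 1) ∧
    ∀ t, 0 ≤ t → K t = Real.exp (-(-Real.log (K 1)) * t) :=
  stmt_12_general K hcont hanti hrange hlt hadd
end
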